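/- Assume $t \leq k \leq n/2$. With $E_t$ and $E_k$ the canonical basis matrices built from rank-$j$ subsets, one has $E_t W_{t,k} = D_{t,k} E_k$, where $D_{t,k}$ is the diagonal(-form) matrix with entries $\binom{k-j}{t-j}$ of multiplicity $\binom{n}{j} - \binom{n}{j-1}$ for $j = 0, \ldots, t$. -/
import Mathlib


/-- The list of elements of a subset of `Fin n`, in increasing order, renumbered as
elements of `{1, …, n}`. -/
def sortedVals {n : ℕ} (s : Finset (Fin n)) : List ℕ :=
  (s.sort (· ≤ ·)).map (fun i => (i : ℕ) + 1)

/-- A `j`-subset `{i₁ < i₂ < ⋯ < i_j}` of `{1, …, n}` has rank `j` iff `iₗ ≥ 2ℓ` for all `ℓ`. -/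
def IsFullRank {n : ℕ} (s : Finset (Fin n)) : Prop :=
  ∀ j < s.card, 2 * (j + 1) ≤ (sortedVals s).getD j 0

instance {n : ℕ} (s : Finset (Fin n)) : Decidable (IsFullRank s) := by
  unfold IsFullRank; infer_instance

/-- The canonical basis matrix `E_k`: rows indexed by the `j`-subsets `J` of rank `j`
(for all `0 ≤ j ≤ k`), columns indexed by `k`-subsets `K`; the row of `J` is the vector
`η_{j,k}(J)`, with entry `1` at `K` iff `J ⊆ K`. -/
def bierMatrix (n k : ℕ) :
    Matrix {J : Finset (Fin n) // J.card ≤ k ∧ IsFullRank J}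
      {K : Finset (Fin n) // K.card = k} ℤ :=
  fun J K => if J.1 ⊆ K.1 then 1 else 0

/-- The inclusion matrix `W_{t,k}` over `ℤ`. -/
def inclMatrix (n t k : ℕ) :
    Matrix {s : Finset (Fin n) // s.card = t} {s : Finset (Fin n) // s.card = k} ℤ :=
  fun T K => if T.1 ⊆ K.1 then 1 else 0

/-- Wilson's diagonal form `D_{t,k}`, written with rows indexed by canonical basis elements
of level `t` and columns by canonical basis elements of level `k`: the diagonal entry at a
rank-`j` subset `J` is `C(k-j, t-j)`; thus `C(k-j, t-j)` occurs with multiplicity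
`C(n,j) - C(n,j-1)`, for `j = 0, …, t`, in increasing order of `j`. -/
def wilsonDiag (n t k : ℕ) :
    Matrix {J : Finset (Fin n) // J.card ≤ t ∧ IsFullRank J}
      {J : Finset (Fin n) // J.card ≤ k ∧ IsFullRank J} ℤ :=
  fun J J' => if J.1 = J'.1 then (((k - J.1.card).choose (t - J.1.card) : ℕ) : ℤ) else 0

lemma count_lemma {n : ℕ} (J K : Finset (Fin n)) (t : ℕ) (hJt : J.card ≤ t) (hJK : J ⊆ K) :
    (Finset.univ.filter (fun T : Finset (Fin n) => T.card = t ∧ J ⊆ T ∧ T ⊆ K)).card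
      = (K.card - J.card).choose (t - J.card) := by
  rw [← Finset.card_sdiff_of_subset hJK, ← Finset.card_powersetCard (t - J.card) (K \ J)]
  apply Finset.card_bij' (fun T _ => T \ J) (fun S _ => S ∪ J)
  · intro T hT
    simp only [Finset.mem_filter, Finset.mem_univ, true_and] at hT
    obtain ⟨hc, hJT, hTK⟩ := hT
    rw [Finset.mem_powersetCard]
    exact ⟨Finset.sdiff_subset_sdiff hTK le_rfl, by rw [Finset.card_sdiff_of_subset hJT, hc]⟩
  · intro S hS
    rw [Finset.mem_powersetCard] at hS
    obtain ⟨hSK, hSc⟩ := hS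
    have hdisj : Disjoint S J := Finset.disjoint_of_subset_left hSK (Finset.sdiff_disjoint)
    simp only [Finset.mem_filter, Finset.mem_univ, true_and]
    refine ⟨?_, Finset.subset_union_right, Finset.union_subset (hSK.trans Finset.sdiff_subset) hJK⟩
    rw [Finset.card_union_of_disjoint hdisj, hSc]
    omega
  · intro T hT
    simp only [Finset.mem_filter, Finset.mem_univ, true_and] at hT
    exact Finset.sdiff_union_of_subset hT.2.1
  · intro S hS
    rw [Finset.mem_powersetCard] at hS
    have hdisj : Disjoint S J := Finset.disjoint_of_subset_left hS.1 (Finset.sdiff_disjoint)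
    rw [Finset.union_sdiff_cancel_right hdisj]

theorem stmt11 (n t k : ℕ) (htk : t ≤ k) (hk : 2 * k ≤ n) :
    bierMatrix n t * inclMatrix n t k = wilsonDiag n t k * bierMatrix n k := by
  ext J K
  simp only [Matrix.mul_apply, bierMatrix, inclMatrix, wilsonDiag]
  have hJk : J.1.card ≤ k := J.2.1.trans htk
  rw [Finset.sum_eq_single (⟨J.1, hJk, J.2.2⟩ :
      {J' : Finset (Fin n) // J'.card ≤ k ∧ IsFullRank J'})]
  · simp only [if_pos rfl]
    by_cases hJK : J.1 ⊆ K.1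
    · rw [if_pos hJK, mul_one]
      have h1 : (∑ T : {s : Finset (Fin n) // s.card = t},
          (if J.1 ⊆ T.1 then (1:ℤ) else 0) * (if T.1 ⊆ K.1 then 1 else 0))
          = ∑ T ∈ Finset.univ.filter (fun s : Finset (Fin n) => s.card = t),
            (if J.1 ⊆ T then (1:ℤ) else 0) * (if T ⊆ K.1 then 1 else 0) :=
        by symm; apply Finset.sum_subtype; intro x; simp
      rw [h1]
      have h2 : ∀ T : Finset (Fin n),
          (if J.1 ⊆ T then (1:ℤ) else 0) * (if T ⊆ K.1 then 1 else 0)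
          = if J.1 ⊆ T ∧ T ⊆ K.1 then 1 else 0 := by
        intro T; split_ifs with h ha hb <;> simp_all
      simp only [h2]
      rw [Finset.sum_boole, Finset.filter_filter,
        count_lemma J.1 K.1 t J.2.1 hJK, K.2, if_pos trivial]
    · rw [if_neg hJK, mul_zero]
      apply Finset.sum_eq_zero
      intro T _
      by_cases h1 : J.1 ⊆ T.1
      · rw [if_neg (fun h2 => hJK (h1.trans h2)), mul_zero]
      · rw [if_neg h1, zero_mul]
  · intro J' _ hne
    rw [if_neg (fun h => hne (Subtype.ext h.symm)), zero_mul]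
  · intro h; exact absurd (Finset.mem_univ _) h
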